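/- Let F be a field and S an infinite sequence over F with nonzero generating function S̄, partial quotients q^{(i)}, and n_i = deg q_1^{(i-1)} + deg q_1^{(i)} for i ≥ 1 (with n_{i+1} = ∞ if q^{(i+1)} does not exist). Fix i ≥ 1 and n ≥ 1. Then the following are equivalent: (i) n_i ≤ n < n_{i+1}; (ii) q^{(i-1)} is not a solution for s = S|n and q^{(i)} is a minimal solution for s. In particular, the linear complexity of S|n equals deg q_1^{(i)} for n ∈ [n_i, n_{i+1}). -/

import Mathlib

/-!
For a pair `f = (f₁, f₂)` of polynomials put `r(f) = f₁ · x⁻¹S̄ − f₂`, a Laurent series in `x⁻¹`.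
`f` is a solution for `S|n` iff `r(f)` has no term `x⁻ᵉ` with `e ≤ n − deg f₁`. The
continued-fraction recursion gives `r(q⁽ⁱ⁾) = −bᵢ · r(q⁽ⁱ⁻¹⁾)` with `v(bᵢ) = deg aᵢ₊₁`, so the
leading term of `r(q⁽ⁱ⁻¹⁾)` has degree exactly `−deg q₁⁽ⁱ⁾`; hence, once `n ≥ deg q₁⁽ⁱ⁾`, `q⁽ⁱ⁾`
is a solution for `S|n` iff `n < nᵢ₊₁` (or the expansion stops at `i`). Minimality for `n ≥ nᵢ`:
if `φ` annihilates `S|n` with `deg φ < deg q₁⁽ⁱ⁾`, the polynomial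
`φ · r(q⁽ⁱ⁻¹⁾) − q₁⁽ⁱ⁻¹⁾ · r(φ, ψ)` would have a nonzero coefficient at the negative power
`x^(deg φ − deg q₁⁽ⁱ⁾)`. Conversely, for `n < nᵢ` either `q⁽ⁱ⁻¹⁾` is itself a solution or
`n < deg q₁⁽ⁱ⁻¹⁾ < deg q₁⁽ⁱ⁾`, contradicting `LC ≤ n`.
-/

open Polynomial HahnSeries in
/-- Polynomial part of a Laurent series in `x⁻¹` (the series variable is `x⁻¹`,
so the coefficient of `xᵏ` is the coefficient at exponent `-k`). -/
noncomputable def polPart {F : Type*} [Field F] (L : LaurentSeries F) : Polynomial F :=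
  ∑ k ∈ Finset.range ((-L.order).toNat + 1), Polynomial.C (L.coeff (-(k : ℤ))) * Polynomial.X ^ k

/-- Embedding of polynomials in `x` into Laurent series in `x⁻¹`. -/
noncomputable def toL {F : Type*} [Field F] (p : Polynomial F) : LaurentSeries F :=
  ∑ k ∈ Finset.range (p.natDegree + 1), HahnSeries.single (-(k : ℤ)) (p.coeff k)

/-- Generating function `S̄ = Σ_{i ≤ 0} S_i xⁱ` of an infinite sequence
(`S k` denotes `S₋ₖ`), as a Laurent series in `x⁻¹`. -/
noncomputable def sbar {F : Type*} [Field F] (S : ℕ → F) : LaurentSeries F :=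
  HahnSeries.ofPowerSeries ℤ F (PowerSeries.mk S)

/-- The remainders `b_i` of the continued-fraction algorithm for `S̄` (junk `0` after it stops). -/
noncomputable def cfB {F : Type*} [Field F] (S : ℕ → F) : ℕ → LaurentSeries F
  | 0 => HahnSeries.single 1 1 * sbar S
  | (i + 1) => (cfB S i)⁻¹ - toL (polPart (cfB S i)⁻¹)

/-- `cfA S i` is the partial-quotient polynomial `a_{i+1}`. -/
noncomputable def cfA {F : Type*} [Field F] (S : ℕ → F) (i : ℕ) : Polynomial F :=
  polPart (cfB S i)⁻¹

/-- `cfQ S i = (q^{(i-1)}, q^{(i)})`, the consecutive partial quotients of `S̄`,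
with `q^{(-1)} = (0,1)`, `q^{(0)} = (1,0)`, `q^{(i+1)} = a_{i+1} q^{(i)} + q^{(i-1)}`. -/
noncomputable def cfQ {F : Type*} [Field F] (S : ℕ → F) :
    ℕ → (Polynomial F × Polynomial F) × (Polynomial F × Polynomial F)
  | 0 => ((0, 1), (1, 0))
  | (i + 1) => ((cfQ S i).2,
      (cfA S i * (cfQ S i).2.1 + (cfQ S i).1.1,
       cfA S i * (cfQ S i).2.2 + (cfQ S i).1.2))

/-- `vLE L m` : the exponential valuation of `L` (largest `x`-degree) is `≤ m`. -/
def vLE {F : Type*} [Field F] (L : LaurentSeries F) (m : ℤ) : Prop :=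
  ∀ i : ℤ, m < i → L.coeff (-i) = 0

/-- `IsPosPart L g` : `x·g = [L]`, the strictly-positive `x`-degree part of `L`. -/
def IsPosPart {F : Type*} [Field F] (L : LaurentSeries F) (g : Polynomial F) : Prop :=
  ∀ k : ℕ, g.coeff k = L.coeff (-(k + 1 : ℤ))
open Polynomial in
/-- φ of degree d satisfies the annihilating condition for the length-`n` sequence
`s₀, s₋₁, …, s₁₋ₙ` (where `s k` denotes `s₋ₖ`). -/
def AnnCond {D : Type*} [CommRing D] (n : ℕ) (s : ℕ → D) (φ : Polynomial D) : Prop :=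
  ∀ t : ℕ, t + φ.natDegree + 1 ≤ n →
    ∑ j ∈ Finset.range (φ.natDegree + 1), φ.coeff j * s (t + j) = 0

/-- φ is a nonzero annihilating polynomial of the length-`n` sequence `s`. -/
def Annihilates {D : Type*} [CommRing D] (n : ℕ) (s : ℕ → D) (φ : Polynomial D) : Prop :=
  φ ≠ 0 ∧ AnnCond n s φ

/-- Linear complexity: minimal degree of a nonzero annihilating polynomial. -/
noncomputable def LC {D : Type*} [CommRing D] (n : ℕ) (s : ℕ → D) : ℕ :=
  sInf {d | ∃ φ : Polynomial D, Annihilates n s φ ∧ φ.natDegree = d}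

/-- `x·ψ = [φ·s̄]`, the strictly-positive-degree part of `φ·s̄`, expressed coefficientwise. -/
def SeqNum {D : Type*} [CommRing D] (n : ℕ) (s : ℕ → D) (φ ψ : Polynomial D) : Prop :=
  ∀ k : ℕ, ψ.coeff k = ∑ j ∈ Finset.range (φ.natDegree + 1),
    if k + 1 ≤ j ∧ j - (k + 1) < n then φ.coeff j * s (j - (k + 1)) else 0

/-- `(φ, ψ)` is a solution for the length-`n` sequence `s`. -/
def IsSolution {D : Type*} [CommRing D] (n : ℕ) (s : ℕ → D) (φ ψ : Polynomial D) : Prop :=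
  Annihilates n s φ ∧ SeqNum n s φ ψ

open Polynomial

theorem HahnSeries.coeff_mul_eq_zero_of_lt {Γ R : Type*} [AddCommMonoid Γ] [LinearOrder Γ]
    [IsOrderedCancelAddMonoid Γ] [NonUnitalNonAssocSemiring R] {x y : HahnSeries Γ R}
    {a b e : Γ} (hx : ∀ j < a, x.coeff j = 0) (hy : ∀ j < b, y.coeff j = 0) (he : e < a + b) :
    (x * y).coeff e = 0 := by
  refine HahnSeries.coeff_eq_zero_of_lt_orderTop
    (lt_of_lt_of_le ?_ HahnSeries.orderTop_add_le_mul)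
  exact (WithTop.coe_lt_coe.2 he).trans_le <| (WithTop.coe_add a b).symm ▸
    add_le_add (HahnSeries.le_orderTop_iff_forall.2 fun j hj => hx j (WithTop.coe_lt_coe.1 hj))
      (HahnSeries.le_orderTop_iff_forall.2 fun j hj => hy j (WithTop.coe_lt_coe.1 hj))

section

variable {D : Type*} [CommRing D] {n : ℕ} {s : ℕ → D}

theorem LC_le {φ : D[X]} (h : Annihilates n s φ) : LC n s ≤ φ.natDegree :=
  Nat.sInf_le ⟨φ, h, rfl⟩

theorem le_LC {d : ℕ} (h : ∃ φ, Annihilates n s φ)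
    (hd : ∀ φ, Annihilates n s φ → d ≤ φ.natDegree) : d ≤ LC n s := by
  obtain ⟨φ, hφ⟩ := h
  exact le_csInf ⟨_, φ, hφ, rfl⟩ fun _ ⟨ψ, hψ, hd'⟩ => hd' ▸ hd ψ hψ

theorem LC_le_length [Nontrivial D] : LC n s ≤ n := by
  refine (LC_le (φ := X ^ n) ⟨(monic_X_pow n).ne_zero, ?_⟩).trans_eq (natDegree_X_pow n)
  intro t ht
  rw [natDegree_X_pow] at ht
  omega

end

section

variable {F : Type*} [Field F]

theorem toL_eq_eval₂ (p : F[X]) : toL p = p.eval₂ HahnSeries.C (HahnSeries.single (-1) 1) := by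
  rw [eval₂_eq_sum_range, toL]
  refine Finset.sum_congr rfl fun k _ => ?_
  rw [HahnSeries.single_pow, HahnSeries.C_apply, HahnSeries.single_mul_single]
  norm_num

@[simp] theorem toL_zero : toL (0 : F[X]) = 0 := by simp [toL_eq_eval₂]

@[simp] theorem toL_one : toL (1 : F[X]) = 1 := by simp [toL_eq_eval₂]

@[simp] theorem toL_add (p q : F[X]) : toL (p + q) = toL p + toL q := by
  simp [toL_eq_eval₂]

@[simp] theorem toL_sub (p q : F[X]) : toL (p - q) = toL p - toL q := by
  simp [toL_eq_eval₂, eval₂_sub]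

@[simp] theorem toL_mul (p q : F[X]) : toL (p * q) = toL p * toL q := by
  simp [toL_eq_eval₂]

theorem coeff_toL_neg_natCast (p : F[X]) (k : ℕ) : (toL p).coeff (-k) = p.coeff k := by
  simp only [toL, HahnSeries.coeff_sum, HahnSeries.coeff_single, neg_inj, Nat.cast_inj,
    Finset.sum_ite_eq, Finset.mem_range]
  split_ifs with hk
  · rfl
  · exact (coeff_eq_zero_of_natDegree_lt (by omega)).symm

theorem coeff_toL_of_pos (p : F[X]) {e : ℤ} (he : 0 < e) : (toL p).coeff e = 0 := by
  simp only [toL, HahnSeries.coeff_sum, HahnSeries.coeff_single]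
  exact Finset.sum_eq_zero fun k _ => if_neg (by omega)

theorem coeff_toL_of_lt (p : F[X]) {e : ℤ} (he : e < -p.natDegree) : (toL p).coeff e = 0 := by
  obtain ⟨k, rfl⟩ : ∃ k : ℕ, e = -k := ⟨(-e).toNat, by omega⟩
  rw [coeff_toL_neg_natCast, coeff_eq_zero_of_natDegree_lt (by omega)]

theorem orderTop_toL {p : F[X]} (hp : p ≠ 0) :
    (toL p).orderTop = ((-p.natDegree : ℤ) : WithTop ℤ) := by
  have hc : (toL p).coeff (-p.natDegree) ≠ 0 := by
    rwa [coeff_toL_neg_natCast, ← Polynomial.leadingCoeff, Polynomial.leadingCoeff_ne_zero]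
  refine le_antisymm (HahnSeries.orderTop_le_of_coeff_ne_zero hc)
    (HahnSeries.le_orderTop_iff_forall.2 fun j hj => coeff_toL_of_lt p (WithTop.coe_lt_coe.1 hj))

theorem coeff_toL_mul (p : F[X]) (L : LaurentSeries F) (e : ℤ) :
    (toL p * L).coeff e = ∑ j ∈ Finset.range (p.natDegree + 1), p.coeff j * L.coeff (e + j) := by
  rw [toL, Finset.sum_mul, HahnSeries.coeff_sum]
  refine Finset.sum_congr rfl fun j _ => ?_
  simpa using
    HahnSeries.coeff_single_mul_add (r := p.coeff j) (x := L) (a := e + j) (b := -(j : ℤ))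

theorem coeff_polPart (L : LaurentSeries F) (k : ℕ) : (polPart L).coeff k = L.coeff (-k) := by
  simp only [polPart, finsetSum_coeff, coeff_C_mul, coeff_X_pow, mul_ite, mul_one, mul_zero,
    Finset.sum_ite_eq, Finset.mem_range]
  split_ifs with hk
  · rfl
  · refine (HahnSeries.coeff_eq_zero_of_lt_order ?_).symm
    omega

theorem coeff_sub_toL_polPart (L : LaurentSeries F) {e : ℤ} (he : e ≤ 0) :
    (L - toL (polPart L)).coeff e = 0 := by
  obtain ⟨k, rfl⟩ : ∃ k : ℕ, e = -k := ⟨(-e).toNat, by omega⟩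
  rw [HahnSeries.coeff_sub, coeff_toL_neg_natCast, coeff_polPart, sub_self]

theorem natDegree_polPart {L : LaurentSeries F} (hL : L ≠ 0) (h : L.order ≤ 0) :
    ((polPart L).natDegree : ℤ) = -L.order := by
  have hc : (polPart L).coeff (-L.order).toNat ≠ 0 := by
    rw [coeff_polPart, show -(((-L.order).toNat : ℕ) : ℤ) = L.order by omega]
    exact HahnSeries.coeff_order_eq_zero.not.2 hL
  have hle : (polPart L).natDegree ≤ (-L.order).toNat := by
    refine natDegree_le_iff_coeff_eq_zero.2 fun m hm => ?_
    rw [coeff_polPart]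
    exact HahnSeries.coeff_eq_zero_of_lt_order (by omega)
  have := le_natDegree_of_ne_zero hc
  omega

theorem coeff_sbar (S : ℕ → F) (e : ℤ) : (sbar S).coeff e = if 0 ≤ e then S e.toNat else 0 := by
  split_ifs with he
  · obtain ⟨k, rfl⟩ := Int.eq_ofNat_of_zero_le he
    rw [sbar, HahnSeries.ofPowerSeries_apply_coeff, PowerSeries.coeff_mk, Int.toNat_natCast]
  · rw [sbar, HahnSeries.ofPowerSeries_apply, HahnSeries.embDomain_of_notMem_range]
    rintro ⟨k, rfl⟩
    exact he (Int.natCast_nonneg k)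

theorem coeff_cfB_zero (S : ℕ → F) (e : ℤ) :
    (cfB S 0).coeff e = if 1 ≤ e then S (e - 1).toNat else 0 := by
  have h := HahnSeries.coeff_single_mul_add (r := (1 : F)) (x := sbar S) (a := e - 1) (b := 1)
  rw [sub_add_cancel] at h
  rw [cfB, h, one_mul, coeff_sbar]
  simp only [sub_nonneg]

theorem coeff_cfB_of_nonpos (S : ℕ → F) (i : ℕ) {e : ℤ} (he : e ≤ 0) : (cfB S i).coeff e = 0 := by
  cases i with
  | zero => rw [coeff_cfB_zero, if_neg (by omega)]
  | succ i => exact coeff_sub_toL_polPart _ he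

theorem order_cfB_pos {S : ℕ → F} {i : ℕ} (h : cfB S i ≠ 0) : 0 < (cfB S i).order := by
  by_contra! hc
  exact HahnSeries.coeff_order_eq_zero.not.2 h (coeff_cfB_of_nonpos S i hc)

theorem cfB_succ_eq_zero {S : ℕ → F} {i : ℕ} (h : cfB S i = 0) : cfB S (i + 1) = 0 := by
  have : polPart (0 : LaurentSeries F) = 0 := by ext k; simp [coeff_polPart]
  rw [cfB, h, inv_zero, this, toL_zero, sub_zero]

theorem cfB_ne_zero_of_le {S : ℕ → F} {i j : ℕ} (hji : j ≤ i) (h : cfB S i ≠ 0) :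
    cfB S j ≠ 0 := by
  induction i, hji using Nat.le_induction with
  | base => exact h
  | succ i _ ih => exact ih fun h0 => h (cfB_succ_eq_zero h0)

theorem natDegree_cfA {S : ℕ → F} {i : ℕ} (h : cfB S i ≠ 0) :
    ((cfA S i).natDegree : ℤ) = (cfB S i).order := by
  have hinv := HahnSeries.order_mul h (inv_ne_zero h)
  rw [mul_inv_cancel₀ h, HahnSeries.order_one] at hinv
  have := order_cfB_pos h
  rw [cfA, natDegree_polPart (inv_ne_zero h) (by omega)]
  omega

@[simp] theorem cfQ_succ_fst (S : ℕ → F) (i : ℕ) : (cfQ S (i + 1)).1 = (cfQ S i).2 := rfl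

theorem natDegree_cfQ_succ {S : ℕ → F} {i : ℕ} (h : cfB S i ≠ 0) (hq : (cfQ S i).2.1 ≠ 0)
    (hle : (cfQ S i).1.1.natDegree ≤ (cfQ S i).2.1.natDegree) :
    (cfQ S (i + 1)).2.1.natDegree = (cfA S i).natDegree + (cfQ S i).2.1.natDegree := by
  have ha : 1 ≤ (cfA S i).natDegree := by
    have := natDegree_cfA h; have := order_cfB_pos h; omega
  have hmul := natDegree_mul (p := cfA S i) (ne_zero_of_natDegree_gt ha) hq
  rw [← hmul]
  exact natDegree_add_eq_left_of_natDegree_lt (by omega)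

theorem cfQ_snd_ne_zero_and_natDegree_le {S : ℕ → F} {i : ℕ} (hb : ∀ j < i, cfB S j ≠ 0) :
    (cfQ S i).2.1 ≠ 0 ∧ (cfQ S i).1.1.natDegree ≤ (cfQ S i).2.1.natDegree := by
  induction i with
  | zero => simp [cfQ]
  | succ i ih =>
    obtain ⟨hq, hle⟩ := ih fun j hj => hb j (by omega)
    have hdeg := natDegree_cfQ_succ (hb i (by omega)) hq hle
    refine ⟨fun h0 => ?_, by simp only [cfQ_succ_fst]; omega⟩
    have := natDegree_cfA (hb i (by omega))
    have := order_cfB_pos (hb i (by omega))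
    rw [h0, natDegree_zero] at hdeg
    omega

theorem natDegree_cfQ_lt_succ {S : ℕ → F} {i : ℕ} (hb : ∀ j ≤ i, cfB S j ≠ 0) :
    (cfQ S i).2.1.natDegree < (cfQ S (i + 1)).2.1.natDegree := by
  obtain ⟨hq, hle⟩ := cfQ_snd_ne_zero_and_natDegree_le fun j hj => hb j hj.le
  have := natDegree_cfA (hb i le_rfl)
  have := order_cfB_pos (hb i le_rfl)
  have := natDegree_cfQ_succ (hb i le_rfl) hq hle
  omega

noncomputable def residualSeries (S : ℕ → F) (p : F[X] × F[X]) : LaurentSeries F :=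
  toL p.1 * cfB S 0 - toL p.2

theorem residualSeries_cfQ_succ_snd (S : ℕ → F) (i : ℕ) :
    residualSeries S (cfQ S (i + 1)).2 =
      toL (cfA S i) * residualSeries S (cfQ S i).2 + residualSeries S (cfQ S i).1 := by
  simp only [residualSeries, cfQ, toL_add, toL_mul]
  ring

theorem residualSeries_cfQ_snd {S : ℕ → F} {i : ℕ} (hb : ∀ j < i, cfB S j ≠ 0) :
    residualSeries S (cfQ S i).2 = -cfB S i * residualSeries S (cfQ S i).1 := by
  induction i with
  | zero => simp [residualSeries, cfQ]
  | succ i ih =>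
    have hbi := hb i (by omega)
    rw [residualSeries_cfQ_succ_snd, cfQ_succ_fst, ih fun j hj => hb j (by omega), cfB, cfA]
    field_simp
    ring

theorem orderTop_residualSeries_cfQ_fst {S : ℕ → F} {i : ℕ} (hb : ∀ j < i, cfB S j ≠ 0) :
    (residualSeries S (cfQ S i).1).orderTop = (cfQ S i).2.1.natDegree := by
  induction i with
  | zero => simp [residualSeries, cfQ]
  | succ i ih =>
    have hbi := hb i (by omega)
    have hb' : ∀ j < i, cfB S j ≠ 0 := fun j hj => hb j (by omega)
    obtain ⟨hq, hle⟩ := cfQ_snd_ne_zero_and_natDegree_le hb'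
    rw [cfQ_succ_fst, residualSeries_cfQ_snd hb', HahnSeries.orderTop_mul,
      HahnSeries.orderTop_neg, ih hb', natDegree_cfQ_succ hbi hq hle,
      ← HahnSeries.order_eq_orderTop_of_ne_zero hbi, ← natDegree_cfA hbi]
    norm_cast

theorem coeff_residualSeries_cfQ_snd_of_lt {S : ℕ → F} {i : ℕ} (hb : ∀ j < i, cfB S j ≠ 0)
    {e : ℤ} (he : e < (cfQ S (i + 1)).2.1.natDegree) :
    (residualSeries S (cfQ S i).2).coeff e = 0 := by
  by_cases hbi : cfB S i = 0
  · rw [residualSeries_cfQ_snd hb, hbi, neg_zero, zero_mul, HahnSeries.coeff_zero]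
  · have hb' : ∀ j < i + 1, cfB S j ≠ 0 := fun j hj => by
      rcases Nat.lt_succ_iff_lt_or_eq.1 hj with hj | rfl
      exacts [hb j hj, hbi]
    refine HahnSeries.coeff_eq_zero_of_lt_orderTop ?_
    rw [← cfQ_succ_fst, orderTop_residualSeries_cfQ_fst hb']
    exact_mod_cast he

theorem coeff_residualSeries_cfQ_snd_of_nonpos {S : ℕ → F} {i : ℕ} (hb : ∀ j < i, cfB S j ≠ 0)
    {e : ℤ} (he : e ≤ 0) : (residualSeries S (cfQ S i).2).coeff e = 0 := by
  rw [residualSeries_cfQ_snd hb]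
  refine HahnSeries.coeff_mul_eq_zero_of_lt (a := 1) (b := 0) (fun j hj => ?_) (fun j hj => ?_)
    (by omega)
  · rw [HahnSeries.coeff_neg, coeff_cfB_of_nonpos S i (by omega), neg_zero]
  · refine HahnSeries.coeff_eq_zero_of_lt_orderTop ?_
    rw [orderTop_residualSeries_cfQ_fst hb]
    exact (WithTop.coe_lt_coe.2 hj).trans_le (by exact_mod_cast Nat.zero_le _)

theorem coeff_toL_mul_cfB_zero (S : ℕ → F) (φ : F[X]) (t : ℕ) :
    (toL φ * cfB S 0).coeff (t + 1) =
      ∑ j ∈ Finset.range (φ.natDegree + 1), φ.coeff j * S (t + j) := by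
  rw [coeff_toL_mul]
  refine Finset.sum_congr rfl fun j _ => ?_
  rw [coeff_cfB_zero, if_pos (by omega)]
  congr 2
  omega

theorem annCond_iff_coeff_residualSeries (S : ℕ → F) (n : ℕ) (φ ψ : F[X]) :
    AnnCond n S φ ↔ ∀ e : ℤ, 1 ≤ e → e ≤ n - φ.natDegree →
      (residualSeries S (φ, ψ)).coeff e = 0 := by
  have hpos : ∀ e : ℤ, 1 ≤ e →
      (residualSeries S (φ, ψ)).coeff e = (toL φ * cfB S 0).coeff e := fun e he => by
    rw [residualSeries, HahnSeries.coeff_sub, coeff_toL_of_pos ψ (by omega), sub_zero]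
  constructor
  · intro h e h1 h2
    obtain ⟨t, rfl⟩ : ∃ t : ℕ, e = t + 1 := ⟨(e - 1).toNat, by omega⟩
    rw [hpos _ h1, coeff_toL_mul_cfB_zero]
    exact h t (by omega)
  · intro h t ht
    rw [← coeff_toL_mul_cfB_zero, ← hpos _ (by omega)]
    exact h _ (by omega) (by omega)

theorem seqNum_iff_coeff_residualSeries (S : ℕ → F) {n : ℕ} {φ : F[X]} (ψ : F[X])
    (hφ : φ.natDegree ≤ n) :
    SeqNum n S φ ψ ↔ ∀ k : ℕ, (residualSeries S (φ, ψ)).coeff (-k) = 0 := by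
  have key : ∀ k : ℕ, (toL φ * cfB S 0).coeff (-k) =
      ∑ j ∈ Finset.range (φ.natDegree + 1),
        if k + 1 ≤ j ∧ j - (k + 1) < n then φ.coeff j * S (j - (k + 1)) else 0 := fun k => by
    rw [coeff_toL_mul]
    refine Finset.sum_congr rfl fun j hj => ?_
    rw [Finset.mem_range] at hj
    rw [coeff_cfB_zero]
    by_cases hkj : k + 1 ≤ j
    · rw [if_pos (by omega), if_pos (by omega)]
      congr 2
      omega
    · rw [if_neg (by omega), if_neg (by omega), mul_zero]
  simp only [SeqNum, residualSeries, HahnSeries.coeff_sub, coeff_toL_neg_natCast, key,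
    sub_eq_zero]
  exact forall_congr' fun k => eq_comm

theorem annCond_cfQ_iff {S : ℕ → F} {i : ℕ} (n : ℕ) (hb : ∀ j < i, cfB S j ≠ 0) :
    AnnCond n S (cfQ S i).2.1 ↔
      cfB S i = 0 ∨ n < (cfQ S i).2.1.natDegree + (cfQ S (i + 1)).2.1.natDegree := by
  rw [annCond_iff_coeff_residualSeries S n _ (cfQ S i).2.2]
  constructor
  · intro h
    by_contra! hc
    obtain ⟨hbi, hn⟩ := hc
    have hb' : ∀ j ≤ i, cfB S j ≠ 0 := fun j hj =>
      (Nat.lt_or_eq_of_le hj).elim (hb j) (· ▸ hbi)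
    have hlt := natDegree_cfQ_lt_succ hb'
    exact HahnSeries.coeff_orderTop_ne
      (orderTop_residualSeries_cfQ_fst (i := i + 1) fun j hj => hb' j (by omega))
      (h _ (by omega) (by omega))
  · rintro (hbi | hn) e h1 h2
    · rw [residualSeries_cfQ_snd hb, hbi, neg_zero, zero_mul, HahnSeries.coeff_zero]
    · exact coeff_residualSeries_cfQ_snd_of_lt hb (by omega)

theorem isSolution_cfQ_iff {S : ℕ → F} {i n : ℕ} (hb : ∀ j < i, cfB S j ≠ 0)
    (hn : (cfQ S i).2.1.natDegree ≤ n) :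
    IsSolution n S (cfQ S i).2.1 (cfQ S i).2.2 ↔
      cfB S i = 0 ∨ n < (cfQ S i).2.1.natDegree + (cfQ S (i + 1)).2.1.natDegree := by
  refine ⟨fun h => (annCond_cfQ_iff n hb).1 h.1.2, fun h => ⟨?_, ?_⟩⟩
  · exact ⟨(cfQ_snd_ne_zero_and_natDegree_le hb).1, (annCond_cfQ_iff n hb).2 h⟩
  · refine (seqNum_iff_coeff_residualSeries S _ hn).2 fun k => ?_
    exact coeff_residualSeries_cfQ_snd_of_nonpos hb (by omega)

theorem le_natDegree_of_annCond (S : ℕ → F) {n : ℕ} (p : F[X] × F[X]) {d : ℤ}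
    (hp : (residualSeries S p).orderTop = d) (hn : p.1.natDegree + d ≤ n) {φ : F[X]}
    (hφ : φ ≠ 0) (hA : AnnCond n S φ) : d ≤ φ.natDegree := by
  by_contra! hlt
  set ψ := polPart (toL φ * cfB S 0)
  have hvan : ∀ e < (n : ℤ) - φ.natDegree + 1, (residualSeries S (φ, ψ)).coeff e = 0 := by
    intro e he
    rcases le_or_gt e 0 with he0 | he0
    · exact coeff_sub_toL_polPart _ he0
    · exact (annCond_iff_coeff_residualSeries S n φ ψ).1 hA e he0 (by omega)
  have hcross : toL φ * residualSeries S p - toL p.1 * residualSeries S (φ, ψ) =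
      toL (p.1 * ψ - φ * p.2) := by
    simp only [residualSeries, toL_sub, toL_mul]
    ring
  have hlead : (toL φ * residualSeries S p).coeff (d - φ.natDegree) ≠ 0 := by
    refine HahnSeries.coeff_orderTop_ne ?_
    rw [HahnSeries.orderTop_mul, orderTop_toL hφ, hp, ← WithTop.coe_add, neg_add_eq_sub]
  have htail : (toL p.1 * residualSeries S (φ, ψ)).coeff (d - φ.natDegree) = 0 :=
    HahnSeries.coeff_mul_eq_zero_of_lt (fun j hj => coeff_toL_of_lt _ hj) hvan (by omega)
  have hpoly := coeff_toL_of_pos (p.1 * ψ - φ * p.2) (e := d - φ.natDegree) (by omega)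
  rw [← hcross, HahnSeries.coeff_sub, htail, sub_zero] at hpoly
  exact hlead hpoly

end

theorem partialQuotient_minimal_solution_iff_general {F : Type*} [Field F] (S : ℕ → F) (i n : ℕ)
    (hi : 1 ≤ i) (hex : cfB S (i - 1) ≠ 0) :
    ((cfQ S i).1.1.natDegree + (cfQ S i).2.1.natDegree ≤ n ∧
        (cfB S i = 0 ∨
          n < (cfQ S (i + 1)).1.1.natDegree + (cfQ S (i + 1)).2.1.natDegree)) ↔
      (¬ IsSolution n S (cfQ S i).1.1 (cfQ S i).1.2 ∧
        IsSolution n S (cfQ S i).2.1 (cfQ S i).2.2 ∧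
        (cfQ S i).2.1.natDegree = LC n S) := by
  obtain ⟨k, rfl⟩ : ∃ k, i = k + 1 := ⟨i - 1, by omega⟩
  rw [Nat.add_sub_cancel] at hex
  simp only [cfQ_succ_fst]
  have hb : ∀ j ≤ k, cfB S j ≠ 0 := fun j hj => cfB_ne_zero_of_le hj hex
  have hb' : ∀ j < k + 1, cfB S j ≠ 0 := fun j hj => hb j (by omega)
  have hlt := natDegree_cfQ_lt_succ hb
  have hprev (h : (cfQ S k).2.1.natDegree ≤ n) :
      IsSolution n S (cfQ S k).2.1 (cfQ S k).2.2 ↔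
        n < (cfQ S k).2.1.natDegree + (cfQ S (k + 1)).2.1.natDegree :=
    (isSolution_cfQ_iff (fun j hj => hb j hj.le) h).trans (or_iff_right (hb k le_rfl))
  constructor
  · rintro ⟨hn, hnext⟩
    have hsol := (isSolution_cfQ_iff hb' (by omega)).2 hnext
    refine ⟨fun h => by have := (hprev (by omega)).1 h; omega, hsol, le_antisymm ?_ (LC_le hsol.1)⟩
    refine le_LC ⟨_, hsol.1⟩ fun φ hφ => ?_
    have := le_natDegree_of_annCond S (cfQ S (k + 1)).1 (orderTop_residualSeries_cfQ_fst hb')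
      (by simp only [cfQ_succ_fst]; omega) hφ.1 hφ.2
    exact_mod_cast this
  · rintro ⟨hnot, hsol, hLC⟩
    refine ⟨?_, (annCond_cfQ_iff n hb').1 hsol.1.2⟩
    by_contra hn
    by_cases hk : (cfQ S k).2.1.natDegree ≤ n
    · exact hnot ((hprev hk).2 (by omega))
    · have := LC_le_length (n := n) (s := S)
      omega

/-- For `S̄ ≠ 0`, `i ≥ 1` with `q⁽ⁱ⁾` existing: `n_i ≤ n < n_{i+1}` iff
`q⁽ⁱ⁻¹⁾` is not a solution for `S|n` and `q⁽ⁱ⁾` is a minimal solution for `S|n`. -/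
theorem partialQuotient_minimal_solution_iff {F : Type*} [Field F] (S : ℕ → F)
    (hS : sbar S ≠ 0) (i n : ℕ) (hi : 1 ≤ i) (hn : 1 ≤ n)
    (hex : cfB S (i - 1) ≠ 0) :
    ((cfQ S i).1.1.natDegree + (cfQ S i).2.1.natDegree ≤ n ∧
        (cfB S i = 0 ∨
          n < (cfQ S (i + 1)).1.1.natDegree + (cfQ S (i + 1)).2.1.natDegree)) ↔
      (¬ IsSolution n S (cfQ S i).1.1 (cfQ S i).1.2 ∧
        IsSolution n S (cfQ S i).2.1 (cfQ S i).2.2 ∧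
        (cfQ S i).2.1.natDegree = LC n S) :=
  partialQuotient_minimal_solution_iff_general S i n hi hex
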